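/- arXiv:1701.05979 — 6 statements merged into one kernel-verified Lean document; each statement's English description precedes it below -/
import Mathlib

section
/- Let f ∈ C^N(ℝ) with Θ := sup_{t∈ℝ} |f^{(N)}(t)| < ∞, let j ∈ ℕ, and let n ≥ 1 be an integer. Set C_φ := sup_{τ∈[0,3N−1]} |(M₁ − τ)^N φ(τ)| and Ω := 1 + (3N−2)/2^j. Then for every x ∈ [0,1], the n-tuple integrals satisfy the pointwise error bound |f^{∫n}(x) − (P̃^j f)^{∫n}(x)| ≤ 2^{−jN} · Ω(3N−1)/(N!·(n−1)!) · Θ · C_φ · x^{n−1}. -/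
open MeasureTheory

/-- The `n`-tuple iterated integral `g^{∫n}(x) = ∫₀^x ∫₀^{ξ_n} ⋯ ∫₀^{ξ₂} g(ξ₁) dξ₁ ⋯ dξ_n`. -/
noncomputable def iterInt (g : ℝ → ℝ) : ℕ → ℝ → ℝ
  | 0 => g
  | n + 1 => fun x => ∫ t in (0 : ℝ)..x, iterInt g n t

/-- The quasi-interpolant `(P̃^j f)(x) = ∑_{k=2−3N}^{2^j−1} f((k+M₁)/2^j) φ(2^j x − k)`. -/
noncomputable def quasiInterp (N : ℕ) (M₁ : ℝ) (φ : ℝ → ℝ) (j : ℕ) (f : ℝ → ℝ)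
    (x : ℝ) : ℝ :=
  ∑ k ∈ Finset.Icc (2 - 3 * (N : ℤ)) (2 ^ j - 1),
    f (((k : ℝ) + M₁) / 2 ^ j) * φ (2 ^ j * x - (k : ℝ))

/-!
For `2 ^ j t ∉ ℤ` (so for almost every `t`), `φ (2 ^ j t - k) ≠ 0` only for the `3N - 1` integers
`k` of a window below `2 ^ j t`. On that window the moment identities make the weights
`φ (2 ^ j t - k)` reproduce the Taylor polynomial of degree `N - 1` of `f` at `t` from its values
at the nodes `(k + M₁) / 2 ^ j`, so `f t - P̃ʲ f t` is a sum of `3N - 1` Lagrange remainders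
times `φ`, each at most `Θ C_φ / (N! 2 ^ {jN})` because `|node - t| = |M₁ - τ| / 2 ^ j`.
(At `2 ^ j t ∈ ℤ` both ends of `supp φ` are hit and there are `3N` terms.) Integrating this
a.e. bound `n` times over `[0, x] ⊆ [0, 1]` gives the factor `x ^ n / n! ≤ x ^ (n-1) / (n-1)!`,
and `Ω ≥ 1`.
-/

open Set intervalIntegral

section Taylor

theorem taylorWithinEval_eq_univ {E : Type*} [NormedAddCommGroup E] [NormedSpace ℝ E]
    {f : ℝ → E} {n : ℕ} {s : Set ℝ} {t : ℝ} (hs : UniqueDiffOn ℝ s) (ht : t ∈ s)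
    (hf : ContDiffAt ℝ n f t) (x : ℝ) :
    taylorWithinEval f n s t x = taylorWithinEval f n univ t x := by
  simp only [taylor_within_apply, iteratedDerivWithin_univ]
  refine Finset.sum_congr rfl fun m hm => ?_
  rw [iteratedDerivWithin_eq_iteratedDeriv hs (hf.of_le ?_) ht]
  exact_mod_cast Nat.lt_succ_iff.mp (Finset.mem_range.mp hm)

theorem abs_sub_taylorWithinEval_univ_le {f : ℝ → ℝ} {n : ℕ} (hf : ContDiff ℝ (n + 1) f)
    {Θ : ℝ} (hΘ : ∀ s, |iteratedDeriv (n + 1) f s| ≤ Θ) (t x : ℝ) :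
    |f x - taylorWithinEval f n univ t x| ≤ Θ * |x - t| ^ (n + 1) / (n + 1).factorial := by
  rcases eq_or_ne t x with rfl | htx
  · simp [taylorWithinEval_self]
  obtain ⟨ξ, -, hξ⟩ := taylor_mean_remainder_lagrange_iteratedDeriv htx hf.contDiffOn
  rw [← taylorWithinEval_eq_univ (uniqueDiffOn_uIcc htx) left_mem_uIcc hf.of_succ.contDiffAt,
    hξ, abs_div, abs_mul, abs_pow, Nat.abs_cast]
  gcongr
  exact hΘ ξ

theorem sum_smul_taylorWithinEval_eq {ι E : Type*} [NormedAddCommGroup E] [NormedSpace ℝ E]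
    (f : ℝ → E) (n : ℕ) (s : Set ℝ) (t : ℝ) (K : Finset ι) (a w : ι → ℝ)
    (hmom : ∀ m ≤ n, ∑ k ∈ K, (a k - t) ^ m * w k = if m = 0 then 1 else 0) :
    ∑ k ∈ K, w k • taylorWithinEval f n s t (a k) = f t := by
  simp_rw [taylor_within_apply, Finset.smul_sum, smul_smul]
  rw [Finset.sum_comm]
  calc ∑ m ∈ Finset.range (n + 1), ∑ k ∈ K,
        (w k * ((m.factorial : ℝ)⁻¹ * (a k - t) ^ m)) • iteratedDerivWithin m f s t
      = ∑ m ∈ Finset.range (n + 1), ((m.factorial : ℝ)⁻¹ * ∑ k ∈ K, (a k - t) ^ m * w k) •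
          iteratedDerivWithin m f s t := by
        refine Finset.sum_congr rfl fun m _ => ?_
        rw [← Finset.sum_smul, Finset.mul_sum]
        congr 1
        exact Finset.sum_congr rfl fun k _ => by ring
    _ = f t := by
        rw [Finset.sum_congr rfl fun m hm =>
          by rw [hmom m (Nat.lt_succ_iff.mp (Finset.mem_range.mp hm))]]
        simp

end Taylor

section Window

/-- For `y ∉ ℤ` these are the `k : ℤ` with `y - k ∈ [0, L]`. -/
noncomputable def supportWindow (L : ℤ) (y : ℝ) : Finset ℤ := Finset.Icc (⌊y⌋ + 1 - L) ⌊y⌋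

variable {L : ℤ} {y : ℝ}

lemma sub_mem_Icc_of_mem_supportWindow {k : ℤ} (hk : k ∈ supportWindow L y) :
    y - k ∈ Icc 0 (L : ℝ) := by
  obtain ⟨hk₁, hk₂⟩ := Finset.mem_Icc.mp hk
  have h₁ : (⌊y⌋ : ℝ) + 1 - L ≤ k := by exact_mod_cast hk₁
  have h₂ : (k : ℝ) ≤ ⌊y⌋ := by exact_mod_cast hk₂
  constructor <;> linarith [Int.floor_le y, Int.lt_floor_add_one y]

lemma mem_supportWindow_of_sub_mem_Icc (hy : ∀ k : ℤ, y ≠ k) {k : ℤ}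
    (hk : y - k ∈ Icc 0 (L : ℝ)) : k ∈ supportWindow L y := by
  have hlt : y < ((k + L : ℤ) : ℝ) :=
    lt_of_le_of_ne (by push_cast; linarith [hk.2]) (hy _)
  have h₁ : k ≤ ⌊y⌋ := Int.le_floor.mpr (by linarith [hk.1])
  have h₂ : ⌊y⌋ < k + L := Int.floor_lt.mpr hlt
  exact Finset.mem_Icc.mpr ⟨by omega, h₁⟩

lemma card_supportWindow (hL : 0 ≤ L) : ((supportWindow L y).card : ℝ) = L := by
  rw [supportWindow, Int.card_Icc, show ⌊y⌋ + 1 - (⌊y⌋ + 1 - L) = L by ring]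
  exact_mod_cast Int.toNat_of_nonneg hL

variable {φ : ℝ → ℝ}

lemma apply_sub_eq_zero_of_notMem_supportWindow (hφ : ∀ τ ∉ Icc 0 (L : ℝ), φ τ = 0)
    (hy : ∀ k : ℤ, y ≠ k) {k : ℤ} (hk : k ∉ supportWindow L y) : φ (y - k) = 0 :=
  hφ _ fun h => hk (mem_supportWindow_of_sub_mem_Icc hy h)

lemma tsum_mul_eq_sum_supportWindow (hφ : ∀ τ ∉ Icc 0 (L : ℝ), φ τ = 0)
    (hy : ∀ k : ℤ, y ≠ k) (g : ℤ → ℝ) :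
    ∑' k : ℤ, g k * φ (y - k) = ∑ k ∈ supportWindow L y, g k * φ (y - k) :=
  tsum_eq_sum fun k hk => by rw [apply_sub_eq_zero_of_notMem_supportWindow hφ hy hk, mul_zero]

end Window

section QuasiInterp

variable {N : ℕ} {M₁ : ℝ} {φ : ℝ → ℝ} {j : ℕ} {t : ℝ}

lemma supportWindow_subset_Icc (ht : t ∈ Ioc 0 1) (hy : ∀ k : ℤ, 2 ^ j * t ≠ k) :
    supportWindow (3 * N - 1) (2 ^ j * t) ⊆ Finset.Icc (2 - 3 * (N : ℤ)) (2 ^ j - 1) := by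
  have h₀ : 0 ≤ ⌊(2 : ℝ) ^ j * t⌋ := Int.floor_nonneg.mpr (by have := ht.1; positivity)
  have h₁ : ⌊(2 : ℝ) ^ j * t⌋ < 2 ^ j := by
    rw [Int.floor_lt]
    exact_mod_cast lt_of_le_of_ne (mul_le_of_le_one_right (by positivity) ht.2)
      (by exact_mod_cast hy (2 ^ j))
  intro k hk
  simp only [supportWindow, Finset.mem_Icc] at hk ⊢
  omega

lemma quasiInterp_eq_sum_supportWindow (hφ : ∀ τ ∉ Icc 0 (3 * N - 1 : ℝ), φ τ = 0)
    (ht : t ∈ Ioc 0 1) (hy : ∀ k : ℤ, 2 ^ j * t ≠ k) (f : ℝ → ℝ) :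
    quasiInterp N M₁ φ j f t = ∑ k ∈ supportWindow (3 * N - 1) (2 ^ j * t),
      φ (2 ^ j * t - k) * f ((k + M₁) / 2 ^ j) := by
  have hφ' : ∀ τ ∉ Icc 0 ((3 * N - 1 : ℤ) : ℝ), φ τ = 0 := by push_cast; exact hφ
  rw [quasiInterp, ← Finset.sum_subset (supportWindow_subset_Icc ht hy) fun k _ hk => by
    rw [apply_sub_eq_zero_of_notMem_supportWindow hφ' hy hk, mul_zero]]
  exact Finset.sum_congr rfl fun k _ => mul_comm _ _

lemma sum_supportWindow_moment (hφ : ∀ τ ∉ Icc 0 (3 * N - 1 : ℝ), φ τ = 0)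
    (hrep : ∀ y : ℝ, ∀ m : ℕ, m ≤ N - 1 →
      ∑' k : ℤ, ((k : ℝ) + M₁ - y) ^ m * φ (y - (k : ℝ)) = if m = 0 then 1 else 0)
    (hy : ∀ k : ℤ, 2 ^ j * t ≠ k) {m : ℕ} (hm : m ≤ N - 1) :
    ∑ k ∈ supportWindow (3 * N - 1) (2 ^ j * t),
      (((k : ℝ) + M₁) / 2 ^ j - t) ^ m * φ (2 ^ j * t - k) = if m = 0 then 1 else 0 := by
  have hφ' : ∀ τ ∉ Icc 0 ((3 * N - 1 : ℤ) : ℝ), φ τ = 0 := by push_cast; exact hφ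
  have hscale : ∀ k : ℤ, ((k : ℝ) + M₁) / 2 ^ j - t = ((2 : ℝ) ^ j)⁻¹ * (k + M₁ - 2 ^ j * t) :=
    fun k => by field_simp
  simp_rw [hscale, mul_pow, mul_assoc, ← Finset.mul_sum,
    ← tsum_mul_eq_sum_supportWindow hφ' hy fun k : ℤ => ((k : ℝ) + M₁ - 2 ^ j * t) ^ m,
    hrep _ m hm]
  split_ifs with h <;> simp [h]

lemma abs_mul_sub_taylorWithinEval_le (hN : N ≠ 0) {f : ℝ → ℝ} (hf : ContDiff ℝ N f) {Θ : ℝ}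
    (hΘ : ∀ s, |iteratedDeriv N f s| ≤ Θ) {Cφ : ℝ}
    (hCφ : ∀ τ ∈ Icc 0 (3 * N - 1 : ℝ), |(M₁ - τ) ^ N * φ τ| ≤ Cφ) {k : ℤ}
    (hk : k ∈ supportWindow (3 * N - 1) (2 ^ j * t)) :
    |φ (2 ^ j * t - k) * (f ((k + M₁) / 2 ^ j) -
      taylorWithinEval f (N - 1) univ t ((k + M₁) / 2 ^ j))| ≤
      Θ * Cφ / (N.factorial * 2 ^ (j * N)) := by
  set τ := 2 ^ j * t - k
  have hτ : τ ∈ Icc 0 (3 * N - 1 : ℝ) := by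
    simpa only [Int.cast_sub, Int.cast_mul, Int.cast_ofNat, Int.cast_natCast, Int.cast_one]
      using sub_mem_Icc_of_mem_supportWindow hk
  have hdist : ((k : ℝ) + M₁) / 2 ^ j - t = (M₁ - τ) / 2 ^ j := by field_simp; ring
  have hΘ₀ : 0 ≤ Θ := (abs_nonneg _).trans (hΘ 0)
  obtain ⟨n, rfl⟩ := Nat.exists_eq_add_one_of_ne_zero hN
  have htaylor := abs_sub_taylorWithinEval_univ_le (by exact_mod_cast hf) hΘ t ((k + M₁) / 2 ^ j)
  rw [Nat.add_sub_cancel, abs_mul]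
  calc |φ τ| * |f ((k + M₁) / 2 ^ j) - taylorWithinEval f n univ t ((k + M₁) / 2 ^ j)|
      ≤ |φ τ| * (Θ * |((k : ℝ) + M₁) / 2 ^ j - t| ^ (n + 1) / (n + 1).factorial) := by
        gcongr
    _ = Θ * |(M₁ - τ) ^ (n + 1) * φ τ| / ((n + 1).factorial * 2 ^ (j * (n + 1))) := by
        rw [hdist, abs_div, abs_mul, abs_pow, abs_pow, abs_of_pos (by positivity : (0 : ℝ) < 2),
          div_pow, ← pow_mul]
        field_simp
    _ ≤ Θ * Cφ / ((n + 1).factorial * 2 ^ (j * (n + 1))) := by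
        gcongr
        exact_mod_cast hCφ τ hτ

theorem abs_sub_quasiInterp_le (hN : N ≠ 0) (hφ : ∀ τ ∉ Icc 0 (3 * N - 1 : ℝ), φ τ = 0)
    (hrep : ∀ y : ℝ, ∀ m : ℕ, m ≤ N - 1 →
      ∑' k : ℤ, ((k : ℝ) + M₁ - y) ^ m * φ (y - (k : ℝ)) = if m = 0 then 1 else 0)
    {f : ℝ → ℝ} (hf : ContDiff ℝ N f) {Θ : ℝ} (hΘ : ∀ s, |iteratedDeriv N f s| ≤ Θ) {Cφ : ℝ}
    (hCφ : ∀ τ ∈ Icc 0 (3 * N - 1 : ℝ), |(M₁ - τ) ^ N * φ τ| ≤ Cφ)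
    (ht : t ∈ Ioc 0 1) (hy : ∀ k : ℤ, 2 ^ j * t ≠ k) :
    |f t - quasiInterp N M₁ φ j f t| ≤ (3 * N - 1) * (Θ * Cφ / (N.factorial * 2 ^ (j * N))) := by
  set K := supportWindow (3 * N - 1) (2 ^ j * t)
  have hreproduce : ∑ k ∈ K, φ (2 ^ j * t - k) •
      taylorWithinEval f (N - 1) univ t ((k + M₁) / 2 ^ j) = f t :=
    sum_smul_taylorWithinEval_eq f (N - 1) univ t K _ _ fun m hm =>
      sum_supportWindow_moment hφ hrep hy hm
  rw [← hreproduce, quasiInterp_eq_sum_supportWindow hφ ht hy, ← Finset.sum_sub_distrib]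
  calc _ ≤ ∑ k ∈ K, |φ (2 ^ j * t - k) * (f ((k + M₁) / 2 ^ j) -
          taylorWithinEval f (N - 1) univ t ((k + M₁) / 2 ^ j))| := by
        refine (Finset.abs_sum_le_sum_abs _ _).trans_eq (Finset.sum_congr rfl fun k _ => ?_)
        rw [smul_eq_mul, ← mul_sub, abs_mul, abs_mul, abs_sub_comm]
    _ ≤ ∑ _k ∈ K, Θ * Cφ / (N.factorial * 2 ^ (j * N)) :=
        Finset.sum_le_sum fun k hk => abs_mul_sub_taylorWithinEval_le hN hf hΘ hCφ hk
    _ = (3 * N - 1) * (Θ * Cφ / (N.factorial * 2 ^ (j * N))) := by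
        rw [Finset.sum_const, nsmul_eq_mul, card_supportWindow (by omega)]
        push_cast; ring

lemma quasiInterp_intervalIntegrable (hφ : Measurable φ)
    (hφB : ∃ B, ∀ t, |φ t| ≤ B) (f : ℝ → ℝ) (a b : ℝ) :
    IntervalIntegrable (quasiInterp N M₁ φ j f) volume a b := by
  obtain ⟨B, hB⟩ := hφB
  have hsum : quasiInterp N M₁ φ j f = ∑ k ∈ Finset.Icc (2 - 3 * (N : ℤ)) (2 ^ j - 1),
      fun x => f ((k + M₁) / 2 ^ j) * φ (2 ^ j * x - k) := by
    ext x
    simp [quasiInterp]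
  rw [hsum]
  exact IntervalIntegrable.sum _ fun k _ =>
    (intervalIntegrable_const.mono_fun' (hφ.comp (by fun_prop)).aestronglyMeasurable
      (ae_of_all _ fun x => hB _)).const_mul _

end QuasiInterp

section IterInt

lemma iterInt_intervalIntegrable {g : ℝ → ℝ} (hg : ∀ a b, IntervalIntegrable g volume a b) :
    ∀ n a b, IntervalIntegrable (iterInt g n) volume a b
  | 0 => hg
  | n + 1 => (continuous_primitive (iterInt_intervalIntegrable hg n) 0).intervalIntegrable

lemma iterInt_sub {f g : ℝ → ℝ} (hf : ∀ a b, IntervalIntegrable f volume a b)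
    (hg : ∀ a b, IntervalIntegrable g volume a b) :
    ∀ n x, iterInt (f - g) n x = iterInt f n x - iterInt g n x
  | 0, _ => rfl
  | n + 1, x => by
    simp only [iterInt]
    rw [integral_congr fun t _ => iterInt_sub hf hg n t]
    exact integral_sub (iterInt_intervalIntegrable hf n 0 x) (iterInt_intervalIntegrable hg n 0 x)

lemma abs_intervalIntegral_le_pow_div_factorial {g : ℝ → ℝ} {E b x : ℝ} {m : ℕ}
    (hx : x ∈ Icc 0 b) (hg : ∀ᵐ t, t ∈ Ioc 0 b → |g t| ≤ E * t ^ m / m.factorial) :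
    |∫ t in 0..x, g t| ≤ E * x ^ (m + 1) / (m + 1).factorial := by
  have hprimitive : ∫ t in 0..x, E * t ^ m / m.factorial = E * x ^ (m + 1) / (m + 1).factorial := by
    rw [intervalIntegral.integral_div, intervalIntegral.integral_const_mul, integral_pow,
      Nat.factorial_succ]
    push_cast
    field_simp
    ring
  rw [← hprimitive]
  refine intervalIntegral.norm_integral_le_of_norm_le (f := g) hx.1 ?_
    ((by fun_prop : Continuous fun t => E * t ^ m / m.factorial).intervalIntegrable 0 x)
  filter_upwards [hg] with t ht ht' using ht ⟨ht'.1, ht'.2.trans hx.2⟩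

lemma pow_succ_div_factorial_le {x : ℝ} (hx : x ∈ Icc 0 1) (m : ℕ) :
    x ^ (m + 1) / (m + 1).factorial ≤ x ^ m / m.factorial := by
  have hfact : ((m.factorial : ℕ) : ℝ) ≤ (m + 1).factorial := by
    exact_mod_cast Nat.factorial_le m.le_succ
  exact div_le_div₀ (by have := hx.1; positivity) (pow_le_pow_of_le_one hx.1 hx.2 m.le_succ)
    (by positivity) hfact

theorem abs_iterInt_succ_le {D : ℝ → ℝ} {E b : ℝ} (hD : ∀ᵐ t, t ∈ Ioc 0 b → |D t| ≤ E) (n : ℕ)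
    {x : ℝ} (hx : x ∈ Icc 0 b) : |iterInt D (n + 1) x| ≤ E * x ^ (n + 1) / (n + 1).factorial := by
  induction n generalizing x with
  | zero => exact abs_intervalIntegral_le_pow_div_factorial hx (by simpa [iterInt] using hD)
  | succ n ih =>
    exact abs_intervalIntegral_le_pow_div_factorial hx
      (ae_of_all _ fun t ht => ih ⟨ht.1.le, ht.2⟩)

end IterInt

lemma ae_mul_ne_intCast {c : ℝ} (hc : c ≠ 0) : ∀ᵐ t : ℝ, ∀ k : ℤ, c * t ≠ k := by
  filter_upwards [(Set.countable_range fun k : ℤ => (k : ℝ) / c).ae_notMem volume] with t ht k hk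
  exact ht ⟨k, by simp only [← hk]; field_simp⟩

theorem pointwise_error_nTuple_integral
    (N : ℕ) (hN : 2 ≤ N) (M₁ : ℝ) (φ : ℝ → ℝ)
    (hφmeas : Measurable φ) (hφbdd : ∃ B, ∀ t, |φ t| ≤ B)
    (hφsupp : ∀ t : ℝ, t ∉ Set.Icc (0 : ℝ) (3 * N - 1) → φ t = 0)
    (hrep : ∀ y : ℝ, ∀ m : ℕ, m ≤ N - 1 →
      ∑' k : ℤ, ((k : ℝ) + M₁ - y) ^ m * φ (y - (k : ℝ)) = if m = 0 then 1 else 0)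
    (f : ℝ → ℝ) (hf : ContDiff ℝ (N : ℕ∞) f)
    (Θ : ℝ) (hΘ : IsLUB (Set.range fun t => |iteratedDeriv N f t|) Θ)
    (Cφ : ℝ)
    (hCφ : IsLUB ((fun τ => |(M₁ - τ) ^ N * φ τ|) '' Set.Icc (0 : ℝ) (3 * N - 1)) Cφ)
    (j : ℕ) (n : ℕ) (hn : 1 ≤ n) (x : ℝ) (hx : x ∈ Set.Icc (0 : ℝ) 1) :
    |iterInt f n x - iterInt (quasiInterp N M₁ φ j f) n x| ≤
      ((2 : ℝ) ^ (j * N))⁻¹ *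
        ((1 + (3 * (N : ℝ) - 2) / 2 ^ j) * (3 * (N : ℝ) - 1) /
          (N.factorial * (n - 1).factorial)) * Θ * Cφ * x ^ (n - 1) := by
  have hΘ' : ∀ s, |iteratedDeriv N f s| ≤ Θ := fun s => hΘ.1 ⟨s, rfl⟩
  have hCφ' : ∀ τ ∈ Icc 0 (3 * N - 1 : ℝ), |(M₁ - τ) ^ N * φ τ| ≤ Cφ :=
    fun τ hτ => hCφ.1 ⟨τ, hτ, rfl⟩
  have hN' : (2 : ℝ) ≤ N := by exact_mod_cast hN
  set E := (3 * N - 1) * (Θ * Cφ / (N.factorial * 2 ^ (j * N)))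
  have hE : 0 ≤ E := by
    have := (abs_nonneg _).trans (hΘ' 0)
    have := (abs_nonneg _).trans (hCφ' 0 ⟨le_rfl, by linarith⟩)
    have : (0 : ℝ) ≤ 3 * N - 1 := by linarith
    positivity
  have hD : ∀ᵐ t, t ∈ Ioc 0 1 → |(f - quasiInterp N M₁ φ j f) t| ≤ E := by
    filter_upwards [ae_mul_ne_intCast (pow_ne_zero j two_ne_zero)] with t hy ht
    exact abs_sub_quasiInterp_le (by omega) hφsupp hrep hf hΘ' hCφ' ht hy
  have hΩ : 1 ≤ 1 + (3 * (N : ℝ) - 2) / 2 ^ j :=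
    le_add_of_nonneg_right (div_nonneg (by linarith) (by positivity))
  obtain ⟨m, rfl⟩ : ∃ m, n = m + 1 := ⟨n - 1, by omega⟩
  rw [← iterInt_sub (fun a b => hf.continuous.intervalIntegrable a b)
    (quasiInterp_intervalIntegrable hφmeas hφbdd f), Nat.add_sub_cancel]
  calc _ ≤ E * x ^ (m + 1) / (m + 1).factorial := abs_iterInt_succ_le hD m hx
    _ ≤ E * (x ^ m / m.factorial) := by
        rw [mul_div_assoc]
        exact mul_le_mul_of_nonneg_left (pow_succ_div_factorial_le hx m) hE
    _ ≤ (1 + (3 * (N : ℝ) - 2) / 2 ^ j) * (E * (x ^ m / m.factorial)) :=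
        le_mul_of_one_le_left (by have := hx.1; positivity) hΩ
    _ = _ := by ring
end

section
/- Let p : ℝ → ℝ be a polynomial of degree at most N−1, and let j ∈ ℕ. Then for every x ∈ ℝ, ∑_{k∈ℤ} p((k+M₁)/2^j) φ(2^j x − k) = p(x); that is, the quasi-interpolation based on φ reproduces all polynomials of degree up to N−1 exactly. -/
/-!
Expand `p` in its Taylor series around `x`. At the node `(k + M₁) / 2 ^ j` the `m`-th Taylor
monomial is `2 ^ (-j m) (k + M₁ - 2 ^ j x) ^ m`, so after exchanging the (locally finite) sum over
`k` with the finite sum over `m`, the reproduction identity at `y = 2 ^ j x` kills every term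
except the constant Taylor coefficient, which is `p.eval x`.
-/

theorem Polynomial.eval_eq_sum_range_taylor {R : Type*} [CommRing R] {p : Polynomial R} {n : ℕ}
    (hp : p.natDegree ≤ n) (x u : R) :
    p.eval u = ∑ m ∈ Finset.range (n + 1), (p.taylor x).coeff m * (u - x) ^ m := by
  rw [← Polynomial.taylor_eval_sub x, Polynomial.eval_eq_sum_range' (n := n + 1)]
  rw [Polynomial.natDegree_taylor]
  omega

theorem tsum_eval_mul_eq_eval_of_moments {ι 𝕜 : Type*} [Field 𝕜] [TopologicalSpace 𝕜]
    [IsTopologicalRing 𝕜] [T2Space 𝕜] {t w : ι → 𝕜} {x : 𝕜} {n : ℕ}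
    (hsum : ∀ m ≤ n, Summable fun i => (t i - x) ^ m * w i)
    (hmom : ∀ m ≤ n, ∑' i, (t i - x) ^ m * w i = if m = 0 then 1 else 0)
    {p : Polynomial 𝕜} (hp : p.natDegree ≤ n) :
    ∑' i, p.eval (t i) * w i = p.eval x := by
  have hrange : ∀ m ∈ Finset.range (n + 1), m ≤ n := fun m hm =>
    Nat.lt_succ_iff.mp (Finset.mem_range.mp hm)
  calc ∑' i, p.eval (t i) * w i
      = ∑' i, ∑ m ∈ Finset.range (n + 1), (p.taylor x).coeff m * ((t i - x) ^ m * w i) := by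
        simp only [Polynomial.eval_eq_sum_range_taylor hp x, Finset.sum_mul, mul_assoc]
    _ = ∑ m ∈ Finset.range (n + 1), (p.taylor x).coeff m * ∑' i, (t i - x) ^ m * w i := by
        rw [Summable.tsum_finsetSum fun m hm => (hsum m (hrange m hm)).mul_left _]
        simp only [tsum_mul_left]
    _ = ∑ m ∈ Finset.range (n + 1), if m = 0 then (p.taylor x).coeff m else 0 := by
        refine Finset.sum_congr rfl fun m hm => ?_
        rw [hmom m (hrange m hm), mul_ite, mul_one, mul_zero]
    _ = p.eval x := by
        rw [Finset.sum_ite_eq', if_pos (Finset.mem_range.mpr n.succ_pos),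
          Polynomial.taylor_coeff_zero]

theorem summable_mul_comp_sub_intCast {φ : ℝ → ℝ} {a b : ℝ}
    (hφ : ∀ t, t ∉ Set.Icc a b → φ t = 0) (g : ℤ → ℝ) (y : ℝ) :
    Summable fun k : ℤ => g k * φ (y - k) := by
  refine summable_of_ne_finset_zero (s := Finset.Icc ⌈y - b⌉ ⌊y - a⌋) fun k hk => ?_
  rw [hφ _ fun ht => hk ?_, mul_zero]
  rw [Finset.mem_Icc, Int.ceil_le, Int.le_floor]
  constructor <;> linarith [ht.1, ht.2]

theorem quasiInterp_reproduces_polynomials_general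
    (N : ℕ) (M₁ : ℝ) (φ : ℝ → ℝ)
    (hφsupp : ∀ t : ℝ, t ∉ Set.Icc (0 : ℝ) (3 * N - 1) → φ t = 0)
    (hrep : ∀ y : ℝ, ∀ m : ℕ, m ≤ N - 1 →
      ∑' k : ℤ, ((k : ℝ) + M₁ - y) ^ m * φ (y - (k : ℝ)) = if m = 0 then 1 else 0)
    (p : Polynomial ℝ) (hp : p.natDegree ≤ N - 1) (j : ℕ) (x : ℝ) :
    ∑' k : ℤ, p.eval (((k : ℝ) + M₁) / 2 ^ j) * φ (2 ^ j * x - (k : ℝ)) = p.eval x := by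
  have hnode : ∀ k : ℤ, ((k : ℝ) + M₁) / 2 ^ j - x = (2 ^ j)⁻¹ * ((k : ℝ) + M₁ - 2 ^ j * x) := by
    intro k
    field_simp
  refine tsum_eval_mul_eq_eval_of_moments (fun m _ => ?_) (fun m hm => ?_) hp
  · exact summable_mul_comp_sub_intCast hφsupp _ _
  · simp only [hnode, mul_pow, mul_assoc, tsum_mul_left, hrep _ m hm]
    split_ifs with hm0 <;> simp [hm0]

theorem quasiInterp_reproduces_polynomials
    (N : ℕ) (hN : 2 ≤ N) (M₁ : ℝ) (φ : ℝ → ℝ)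
    (hφmeas : Measurable φ) (hφbdd : ∃ B, ∀ t, |φ t| ≤ B)
    (hφsupp : ∀ t : ℝ, t ∉ Set.Icc (0 : ℝ) (3 * N - 1) → φ t = 0)
    (hrep : ∀ y : ℝ, ∀ m : ℕ, m ≤ N - 1 →
      ∑' k : ℤ, ((k : ℝ) + M₁ - y) ^ m * φ (y - (k : ℝ)) = if m = 0 then 1 else 0)
    (p : Polynomial ℝ) (hp : p.natDegree ≤ N - 1) (j : ℕ) (x : ℝ) :
    ∑' k : ℤ, p.eval (((k : ℝ) + M₁) / 2 ^ j) * φ (2 ^ j * x - (k : ℝ)) = p.eval x :=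
  quasiInterp_reproduces_polynomials_general N M₁ φ hφsupp hrep p hp j x
end

section
/- Let f ∈ C^N(ℝ) with Θ := sup_{t∈ℝ} |f^{(N)}(t)| < ∞. Then for every j ∈ ℕ and k ∈ ℤ, the exact wavelet coefficient c_{j,k} = ∫_ℝ f(x) φ_{j,k}(x) dx, where φ_{j,k}(x) = 2^{j/2} φ(2^j x − k), satisfies |2^{j/2} c_{j,k} − f((k+M₁)/2^j)| ≤ 2^{−jN} · (Θ/N!) · ∫₀^{3N−1} |t − M₁|^N |φ(t)| dt; that is, up to an O(2^{−jN}) error the coefficient c_{j,k} equals the rescaled point value 2^{−j/2} f((k+M₁)/2^j). -/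
/-!
Substituting `t = 2^j x - k` turns `2^{j/2} c` into `∫ g φ` with `g t = f (2^{-j} (t + k))`,
whose `N`-th derivative is bounded by `2^{-jN} Θ`. Expand `g` around `M₁` by Taylor's formula
with Lagrange remainder: the vanishing moments of `φ` annihilate every term of the Taylor
polynomial except the constant one, `g M₁ = f ((k + M₁) / 2^j)`, and the remainder is at most
`2^{-jN} Θ / N! * |t - M₁|^N`.
-/

open MeasureTheory Set

theorem abs_sub_taylor_sum_le {f : ℝ → ℝ} {N : ℕ} (hf : ContDiff ℝ N f) {Θ : ℝ}
    (hΘ : ∀ t, |iteratedDeriv N f t| ≤ Θ) (x y : ℝ) :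
    |f y - ∑ m ∈ Finset.range N, iteratedDeriv m f x / m.factorial * (y - x) ^ m|
      ≤ Θ / N.factorial * |y - x| ^ N := by
  cases N with
  | zero => simpa using hΘ y
  | succ n =>
    rcases eq_or_ne x y with rfl | hxy
    · simp [Finset.sum_range_succ', zero_pow]
    obtain ⟨z, -, hz⟩ := taylor_mean_remainder_lagrange_iteratedDeriv hxy hf.contDiffOn
    have hpoly : taylorWithinEval f n (uIcc x y) x y =
        ∑ m ∈ Finset.range (n + 1), iteratedDeriv m f x / m.factorial * (y - x) ^ m := by
      rw [taylor_within_apply]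
      refine Finset.sum_congr rfl fun m hm => ?_
      rw [iteratedDerivWithin_eq_iteratedDeriv (uniqueDiffOn_uIcc hxy)
        (hf.contDiffAt.of_le (by norm_cast; simpa using (Finset.mem_range.1 hm).le))
        left_mem_uIcc, smul_eq_mul]
      ring
    rw [← hpoly, hz, abs_div, abs_mul, abs_pow, Nat.abs_cast, div_mul_eq_mul_div]
    gcongr
    exact hΘ z

theorem iteratedDeriv_comp_mul_add {𝕜 : Type*} [NontriviallyNormedField 𝕜] {n : ℕ} {f : 𝕜 → 𝕜}
    (hf : ContDiff 𝕜 n f) (c b x : 𝕜) :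
    iteratedDeriv n (fun t => f (c * (t + b))) x = c ^ n * iteratedDeriv n f (c * (x + b)) := by
  rw [iteratedDeriv_comp_add_const n (fun t => f (c * t)), iteratedDeriv_comp_const_mul hf]

theorem HasCompactSupport.integrable_continuous_mul {X : Type*} [TopologicalSpace X]
    [T2Space X] [MeasurableSpace X] [OpensMeasurableSpace X] {μ : Measure X} {φ ψ : X → ℝ}
    (hφc : HasCompactSupport φ) (hφ : LocallyIntegrable φ μ) (hψ : Continuous ψ) :
    Integrable (fun x => ψ x * φ x) μ :=
  ((hφ.integrableOn_isCompact hφc).continuousOn_mul hψ.continuousOn hφc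
    ).integrable_of_forall_notMem_eq_zero fun x hx => by rw [image_eq_zero_of_notMem_tsupport hx, mul_zero]

theorem integral_sum_mul_pow_sub_mul_eq_of_moments {N : ℕ} (hN : 0 < N) {M₁ : ℝ} {φ : ℝ → ℝ}
    (hint : ∀ m < N, Integrable (fun t => (t - M₁) ^ m * φ t))
    (hφint : ∫ t, φ t = 1) (hmom : ∀ m, 1 ≤ m → m < N → ∫ t, (t - M₁) ^ m * φ t = 0)
    (a : ℕ → ℝ) :
    ∫ t, (∑ m ∈ Finset.range N, a m * (t - M₁) ^ m) * φ t = a 0 := by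
  simp_rw [Finset.sum_mul, mul_assoc]
  rw [integral_finsetSum _ fun m hm => (hint m (Finset.mem_range.1 hm)).const_mul _,
    Finset.sum_eq_single_of_mem 0 (Finset.mem_range.2 hN)]
  · simp only [pow_zero, mul_one, integral_const_mul, hφint]
  · intro m hm hm0
    rw [integral_const_mul, hmom m (Nat.one_le_iff_ne_zero.2 hm0) (Finset.mem_range.1 hm),
      mul_zero]

theorem abs_integral_mul_sub_le_of_moments {N : ℕ} (hN : 0 < N) {M₁ Θ : ℝ} {φ g : ℝ → ℝ}
    (hφc : HasCompactSupport φ) (hφ : LocallyIntegrable φ) (hφint : ∫ t, φ t = 1)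
    (hmom : ∀ m, 1 ≤ m → m < N → ∫ t, (t - M₁) ^ m * φ t = 0)
    (hg : ContDiff ℝ N g) (hΘ : ∀ t, |iteratedDeriv N g t| ≤ Θ) :
    |(∫ t, g t * φ t) - g M₁| ≤ Θ / N.factorial * ∫ t, |t - M₁| ^ N * |φ t| := by
  have hint {ψ : ℝ → ℝ} (hψ : Continuous ψ) : Integrable (fun t => ψ t * φ t) :=
    hφc.integrable_continuous_mul hφ hψ
  set P : ℝ → ℝ := fun t =>
    ∑ m ∈ Finset.range N, iteratedDeriv m g M₁ / m.factorial * (t - M₁) ^ m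
  have hPc : Continuous P := by fun_prop
  have hPφ : ∫ t, P t * φ t = g M₁ := by
    simpa using integral_sum_mul_pow_sub_mul_eq_of_moments hN
      (fun m _ => hint (by fun_prop)) hφint hmom (fun m => iteratedDeriv m g M₁ / m.factorial)
  have hdiff : (∫ t, g t * φ t) - g M₁ = ∫ t, (g t - P t) * φ t := by
    simp_rw [sub_mul]
    rw [integral_sub (hint hg.continuous) (hint hPc), hPφ]
  have hbound : Integrable fun t => |t - M₁| ^ N * |φ t| := by
    simpa [abs_mul] using (hint (ψ := fun t => |t - M₁| ^ N) (by fun_prop)).abs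
  rw [hdiff, ← integral_const_mul]
  refine (Real.norm_eq_abs _).symm.trans_le <|
    norm_integral_le_of_norm_le (hbound.const_mul _) (ae_of_all _ fun t => ?_)
  rw [Real.norm_eq_abs, abs_mul, ← mul_assoc]
  exact mul_le_mul_of_nonneg_right (abs_sub_taylor_sum_le hg hΘ M₁ t) (abs_nonneg _)

theorem integral_mul_comp_mul_sub {a : ℝ} (ha : a ≠ 0) (b : ℝ) (f φ : ℝ → ℝ) :
    |a| * ∫ x, f x * φ (a * x - b) = ∫ t, f (a⁻¹ * (t + b)) * φ t := by
  set F : ℝ → ℝ := fun t => f (a⁻¹ * (t + b)) * φ t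
  have h : (fun x => f x * φ (a * x - b)) = fun x => F (a * x - b) := by
    funext x
    simp only [F, sub_add_cancel, inv_mul_cancel_left₀ ha]
  rw [h, Measure.integral_comp_mul_left (fun y => F (y - b)) a, integral_sub_right_eq_self,
    smul_eq_mul, abs_inv, mul_inv_cancel_left₀ (abs_ne_zero.2 ha)]

theorem wavelet_coefficient_approx_point_value
    (N : ℕ) (hN : 2 ≤ N) (M₁ : ℝ) (φ : ℝ → ℝ)
    (hφmeas : Measurable φ) (hφbdd : ∃ B, ∀ t, |φ t| ≤ B)
    (hφsupp : ∀ t : ℝ, t ∉ Set.Icc (0 : ℝ) (3 * N - 1) → φ t = 0)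
    (hφint : ∫ t : ℝ, φ t = 1)
    (hmom : ∀ m : ℕ, 1 ≤ m → m ≤ N - 1 → ∫ t : ℝ, (t - M₁) ^ m * φ t = 0)
    (f : ℝ → ℝ) (hf : ContDiff ℝ (N : ℕ∞) f)
    (Θ : ℝ) (hΘ : IsLUB (Set.range fun t => |iteratedDeriv N f t|) Θ)
    (j : ℕ) (k : ℤ)
    (c : ℝ) (hc : c = ∫ x : ℝ, f x * ((2 : ℝ) ^ ((j : ℝ) / 2) * φ (2 ^ j * x - (k : ℝ)))) :
    |(2 : ℝ) ^ ((j : ℝ) / 2) * c - f (((k : ℝ) + M₁) / 2 ^ j)| ≤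
      ((2 : ℝ) ^ (j * N))⁻¹ * (Θ / N.factorial) *
        ∫ t in (0 : ℝ)..(3 * (N : ℝ) - 1), |t - M₁| ^ N * |φ t| := by
  obtain ⟨B, hB⟩ := hφbdd
  have hφc : HasCompactSupport φ := HasCompactSupport.intro isCompact_Icc hφsupp
  have hφ : LocallyIntegrable φ :=
    (memLp_top_of_bound hφmeas.aestronglyMeasurable B (ae_of_all _ hB)).locallyIntegrable le_top
  set g : ℝ → ℝ := fun t => f ((2 ^ j)⁻¹ * (t + k))
  have hcoef : (2 : ℝ) ^ ((j : ℝ) / 2) * c = ∫ t, g t * φ t := by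
    have hsq : (2 : ℝ) ^ ((j : ℝ) / 2) * 2 ^ ((j : ℝ) / 2) = |2 ^ j| := by
      rw [← Real.rpow_add two_pos, add_halves, Real.rpow_natCast, abs_of_pos (by positivity)]
    simp_rw [hc, mul_left_comm (f _), integral_const_mul, ← mul_assoc, hsq]
    exact integral_mul_comp_mul_sub (by positivity) _ f φ
  have hgΘ (t : ℝ) : |iteratedDeriv N g t| ≤ ((2 : ℝ) ^ (j * N))⁻¹ * Θ := by
    rw [iteratedDeriv_comp_mul_add hf, abs_mul, abs_of_pos (by positivity), inv_pow, ← pow_mul]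
    exact mul_le_mul_of_nonneg_left (hΘ.1 ⟨_, rfl⟩) (by positivity)
  have hgM : g M₁ = f ((k + M₁) / 2 ^ j) := congrArg f (by ring)
  have hinterval : (∫ t in (0 : ℝ)..(3 * (N : ℝ) - 1), |t - M₁| ^ N * |φ t|) =
      ∫ t, |t - M₁| ^ N * |φ t| := by
    rw [intervalIntegral.integral_of_le (by linarith [show (2 : ℝ) ≤ N by exact_mod_cast hN]),
      ← integral_Icc_eq_integral_Ioc]
    exact setIntegral_eq_integral_of_forall_compl_eq_zero fun t ht => by
      rw [hφsupp t ht, abs_zero, mul_zero]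
  have hg : ContDiff ℝ N g := hf.comp (by fun_prop)
  rw [hcoef, ← hgM, hinterval, mul_div_assoc']
  exact abs_integral_mul_sub_le_of_moments (by omega) hφc hφ hφint
    (fun m h1 h2 => hmom m h1 (by omega)) hg hgΘ
end

section
/- For every j ∈ ℕ, every integer n ≥ 1, every l ∈ ℤ, and every x ∈ [0,1], the n-tuple integral of the shifted dilate of φ is of size O(2^{−j}) uniformly in l and x: |∫₀^x ∫₀^{ξ_n} ⋯ ∫₀^{ξ₂} φ(2^j ξ₁ − l) dξ₁ ⋯ dξ_n| ≤ 2^{−j} · (3N−1) · (sup_{t∈ℝ} |φ(t)|) · x^{n−1}/(n−1)!. -/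
open MeasureTheory

/-!
The dilate `g t = φ (2 ^ j * t - l)` is bounded by `B` and supported on an interval of length
`(3N - 1) / 2 ^ j`, so every primitive `∫₀^x g` with `x ≥ 0` is bounded by
`C = 2⁻ʲ (3N - 1) B`. Integrating the bound `C t^m / m!` once more gives `C x^(m+1) / (m+1)!`,
so the estimate propagates through all the iterated integrals.
-/

open Set Function

theorem abs_setIntegral_le_of_support_subset {α : Type*} [MeasurableSpace α] {μ : Measure α}
    {f : α → ℝ} {s t : Set α} {B : ℝ} (hs : MeasurableSet s) (hμs : μ s ≠ ⊤) (hB : 0 ≤ B)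
    (hfB : ∀ x ∈ s, |f x| ≤ B) (hfs : support f ⊆ s) :
    |∫ x in t, f x ∂μ| ≤ B * μ.real s := by
  rw [← indicator_eq_self.mpr hfs, setIntegral_indicator hs]
  calc |∫ x in t ∩ s, f x ∂μ| ≤ B * μ.real (t ∩ s) :=
        norm_setIntegral_le_of_norm_le_const (measure_lt_top_mono inter_subset_right hμs.lt_top)
          fun x hx => (Real.norm_eq_abs (f x)).trans_le (hfB x hx.2)
    _ ≤ B * μ.real s := by gcongr; exact inter_subset_right

theorem support_comp_mul_sub_subset {φ : ℝ → ℝ} {a b c d : ℝ} (hc : 0 < c)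
    (hφ : support φ ⊆ Icc a b) :
    support (fun t => φ (c * t - d)) ⊆ Icc ((a + d) / c) ((b + d) / c) := by
  intro t ht
  obtain ⟨ha, hb⟩ := hφ ht
  rw [mem_Icc, div_le_iff₀ hc, le_div_iff₀ hc]
  constructor <;> linarith

theorem abs_intervalIntegral_comp_mul_sub_le {φ : ℝ → ℝ} {a b c d B : ℝ} (hc : 0 < c)
    (hab : a ≤ b) (hφB : ∀ t, |φ t| ≤ B) (hφ : support φ ⊆ Icc a b) {x : ℝ}
    (hx : 0 ≤ x) : |∫ t in (0 : ℝ)..x, φ (c * t - d)| ≤ c⁻¹ * (b - a) * B := by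
  rw [intervalIntegral.integral_of_le hx]
  refine (abs_setIntegral_le_of_support_subset measurableSet_Icc measure_Icc_lt_top.ne
    ((abs_nonneg _).trans (hφB 0)) (fun t _ => hφB _)
    (support_comp_mul_sub_subset hc hφ)).trans_eq ?_
  rw [Real.volume_real_Icc_of_le (by gcongr)]
  field_simp
  ring

theorem integral_pow_div_factorial (m : ℕ) (x : ℝ) :
    ∫ t in (0 : ℝ)..x, t ^ m / m.factorial = x ^ (m + 1) / (m + 1).factorial := by
  rw [intervalIntegral.integral_div, integral_pow, Nat.factorial_succ]
  push_cast
  field_simp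
  ring

theorem abs_iterInt_succ_le_s11 {g : ℝ → ℝ} {C : ℝ}
    (hg : ∀ x, 0 ≤ x → |∫ t in (0 : ℝ)..x, g t| ≤ C) (m : ℕ) {x : ℝ} (hx : 0 ≤ x) :
    |iterInt g (m + 1) x| ≤ C * x ^ m / m.factorial := by
  induction m generalizing x with
  | zero => simpa [iterInt] using hg x hx
  | succ m ih =>
    calc |iterInt g (m + 2) x| ≤ ∫ t in (0 : ℝ)..x, C * (t ^ m / m.factorial) := by
          refine intervalIntegral.norm_integral_le_of_norm_le (f := iterInt g (m + 1)) hx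
            (.of_forall fun t ht => ?_) ?_
          · exact (ih ht.1.le).trans_eq (mul_div_assoc ..)
          · exact (by fun_prop : Continuous fun t : ℝ => C * (t ^ m / m.factorial))
              |>.intervalIntegrable _ _
      _ = C * x ^ (m + 1) / (m + 1).factorial := by
          rw [intervalIntegral.integral_const_mul, integral_pow_div_factorial, mul_div_assoc]

theorem nTuple_integral_shifted_dilate_small_general
    (N : ℕ) (hN : 2 ≤ N) (φ : ℝ → ℝ)
    (hφsupp : ∀ t : ℝ, t ∉ Set.Icc (0 : ℝ) (3 * N - 1) → φ t = 0)
    (B : ℝ) (hB : IsLUB (Set.range fun t => |φ t|) B)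
    (j : ℕ) (n : ℕ) (hn : 1 ≤ n) (l : ℤ) (x : ℝ) (hx : x ∈ Set.Icc (0 : ℝ) 1) :
    |iterInt (fun t => φ (2 ^ j * t - (l : ℝ))) n x| ≤
      ((2 : ℝ) ^ j)⁻¹ * (3 * (N : ℝ) - 1) * B * x ^ (n - 1) / (n - 1).factorial := by
  have hφB : ∀ t, |φ t| ≤ B := fun t => hB.1 ⟨t, rfl⟩
  have hlen : (0 : ℝ) ≤ 3 * N - 1 := by
    have : (2 : ℝ) ≤ N := by exact_mod_cast hN
    linarith
  obtain ⟨m, rfl⟩ : ∃ m, n = m + 1 := ⟨n - 1, by omega⟩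
  simpa using abs_iterInt_succ_le_s11
    (fun y hy => abs_intervalIntegral_comp_mul_sub_le (by positivity) hlen hφB
      (support_subset_iff'.mpr hφsupp) hy) m hx.1

theorem nTuple_integral_shifted_dilate_small
    (N : ℕ) (hN : 2 ≤ N) (φ : ℝ → ℝ)
    (hφmeas : Measurable φ)
    (hφsupp : ∀ t : ℝ, t ∉ Set.Icc (0 : ℝ) (3 * N - 1) → φ t = 0)
    (B : ℝ) (hB : IsLUB (Set.range fun t => |φ t|) B)
    (j : ℕ) (n : ℕ) (hn : 1 ≤ n) (l : ℤ) (x : ℝ) (hx : x ∈ Set.Icc (0 : ℝ) 1) :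
    |iterInt (fun t => φ (2 ^ j * t - (l : ℝ))) n x| ≤
      ((2 : ℝ) ^ j)⁻¹ * (3 * (N : ℝ) - 1) * B * x ^ (n - 1) / (n - 1).factorial :=
  nTuple_integral_shifted_dilate_small_general N hN φ hφsupp B hB j n hn l x hx
end

section
/- Let λ > 0 and let θ > 0 satisfy θ = √(2λ) · cosh(θ/4). Define u : [0,1] → ℝ by u(x) = −2 ln( cosh(θ(2x−1)/4) / cosh(θ/4) ). Then u is smooth, u(0) = u(1) = 0, and u satisfies the Bratu equation u″(x) + λ e^{u(x)} = 0 for every x ∈ [0,1]. -/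
open Real

theorem bratu_exact_solution
    (lam θ : ℝ) (hlam : 0 < lam) (hθ : 0 < θ)
    (hθeq : θ = Real.sqrt (2 * lam) * Real.cosh (θ / 4))
    (u : ℝ → ℝ)
    (hu : ∀ x, u x = -2 * Real.log (Real.cosh (θ * (2 * x - 1) / 4) / Real.cosh (θ / 4))) :
    ContDiffOn ℝ (⊤ : ℕ∞) u (Set.Icc 0 1) ∧ u 0 = 0 ∧ u 1 = 0 ∧
      ∀ x ∈ Set.Icc (0 : ℝ) 1, deriv (deriv u) x + lam * Real.exp (u x) = 0 := by
  set C := Real.cosh (θ / 4) with hC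
  have hCpos : 0 < C := Real.cosh_pos _
  have hufun : u = fun x => -2 * Real.log (Real.cosh (θ * (2 * x - 1) / 4) / C) :=
    funext fun x => hu x
  -- inner affine function and its derivative
  have hv : ∀ x : ℝ, HasDerivAt (fun x : ℝ => θ * (2 * x - 1) / 4) (θ / 2) x := by
    intro x
    have h := ((((hasDerivAt_id x).const_mul 2).sub_const 1).const_mul θ).div_const 4
    refine h.congr_deriv ?_
    ring
  -- first derivative of u
  have hd1 : ∀ x : ℝ, HasDerivAt u
      (-θ * (Real.sinh (θ * (2 * x - 1) / 4) / Real.cosh (θ * (2 * x - 1) / 4))) x := by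
    intro x
    rw [hufun]
    have hcosh : HasDerivAt (fun x : ℝ => Real.cosh (θ * (2 * x - 1) / 4))
        (Real.sinh (θ * (2 * x - 1) / 4) * (θ / 2)) x :=
      (Real.hasDerivAt_cosh _).comp x (hv x)
    have hlog : HasDerivAt (fun x : ℝ => Real.log (Real.cosh (θ * (2 * x - 1) / 4) / C))
        ((Real.sinh (θ * (2 * x - 1) / 4) * (θ / 2) / C) /
          (Real.cosh (θ * (2 * x - 1) / 4) / C)) x := by
      exact ((hcosh.div_const C).log (by positivity))
    have h := hlog.const_mul (-2 : ℝ)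
    refine h.congr_deriv ?_
    have hcp : Real.cosh (θ * (2 * x - 1) / 4) ≠ 0 := (Real.cosh_pos _).ne'
    field_simp
  have hderiv1 : deriv u = fun x =>
      -θ * (Real.sinh (θ * (2 * x - 1) / 4) / Real.cosh (θ * (2 * x - 1) / 4)) :=
    funext fun x => (hd1 x).deriv
  -- second derivative
  have hd2 : ∀ x : ℝ, HasDerivAt (deriv u)
      (-θ ^ 2 / 2 / Real.cosh (θ * (2 * x - 1) / 4) ^ 2) x := by
    intro x
    rw [hderiv1]
    have hs : HasDerivAt (fun x : ℝ => Real.sinh (θ * (2 * x - 1) / 4))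
        (Real.cosh (θ * (2 * x - 1) / 4) * (θ / 2)) x :=
      (Real.hasDerivAt_sinh _).comp x (hv x)
    have hc : HasDerivAt (fun x : ℝ => Real.cosh (θ * (2 * x - 1) / 4))
        (Real.sinh (θ * (2 * x - 1) / 4) * (θ / 2)) x :=
      (Real.hasDerivAt_cosh _).comp x (hv x)
    have hcp : Real.cosh (θ * (2 * x - 1) / 4) ≠ 0 := (Real.cosh_pos _).ne'
    have h := ((hs.div hc hcp).const_mul (-θ))
    refine h.congr_deriv ?_
    have hid : Real.cosh (θ * (2 * x - 1) / 4) ^ 2 - Real.sinh (θ * (2 * x - 1) / 4) ^ 2 = 1 :=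
      Real.cosh_sq_sub_sinh_sq _
    field_simp
    nlinarith [hid, sq_nonneg (Real.cosh (θ * (2 * x - 1) / 4))]
  -- smoothness
  have hsmooth : ContDiff ℝ (⊤ : ℕ∞) u := by
    rw [hufun]
    have h1 : ContDiff ℝ (⊤ : ℕ∞) (fun x : ℝ => Real.cosh (θ * (2 * x - 1) / 4) / C) :=
      (Real.contDiff_cosh.comp ((contDiff_const.mul ((contDiff_const.mul contDiff_id).sub contDiff_const)).div_const 4)).div_const C
    exact contDiff_const.mul (h1.log (fun x => by positivity))
  refine ⟨hsmooth.contDiffOn, ?_, ?_, ?_⟩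
  · rw [hu 0, show θ * (2 * (0:ℝ) - 1) / 4 = -(θ/4) by ring, Real.cosh_neg, ← hC,
      div_self hCpos.ne', Real.log_one, mul_zero]
  · rw [hu 1, show θ * (2 * (1:ℝ) - 1) / 4 = θ/4 by ring, ← hC, div_self hCpos.ne',
      Real.log_one, mul_zero]
  · intro x hx
    have hd2' := (hd2 x).deriv
    rw [hd2', hu x]
    set a := Real.cosh (θ * (2 * x - 1) / 4) with ha
    have hap : 0 < a := Real.cosh_pos _
    have hexp : Real.exp (-2 * Real.log (a / C)) = (C / a) ^ 2 := by
      have : -2 * Real.log (a / C) = Real.log ((C / a) ^ 2) := by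
        rw [Real.log_pow, Real.log_div hCpos.ne' hap.ne', Real.log_div hap.ne' hCpos.ne']
        push_cast; ring
      rw [this, Real.exp_log (by positivity)]
    rw [hexp]
    have hθsq : θ ^ 2 = 2 * lam * C ^ 2 := by
      have h2 : (0:ℝ) ≤ 2 * lam := by positivity
      rw [hθeq, mul_pow, Real.sq_sqrt h2]
    field_simp
    nlinarith [hap, hCpos]
end

section
/- Let k ∈ (0, √2) satisfy k = √2 · cos(k/4). Define u : [0,1] → ℝ by u(x) = 2 ln( k / cos(k(2x−1)/4) ) − ln 2 (note cos(k(2x−1)/4) > 0 for all x ∈ [0,1] since |k(2x−1)/4| ≤ k/4 < π/2). Then u is smooth, u(0) = u(1) = 0, and u satisfies the Bratu equation with λ = −1, i.e. u″(x) − e^{u(x)} = 0 for every x ∈ [0,1]. -/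
open Real

theorem bratu_exact_solution_negative_lambda
    (k : ℝ) (hk : k ∈ Set.Ioo 0 (Real.sqrt 2))
    (hkeq : k = Real.sqrt 2 * Real.cos (k / 4))
    (u : ℝ → ℝ)
    (hu : ∀ x, u x = 2 * Real.log (k / Real.cos (k * (2 * x - 1) / 4)) - Real.log 2) :
    ContDiffOn ℝ (⊤ : ℕ∞) u (Set.Icc 0 1) ∧ u 0 = 0 ∧ u 1 = 0 ∧
      ∀ x ∈ Set.Icc (0 : ℝ) 1, deriv (deriv u) x - Real.exp (u x) = 0 := by
  obtain ⟨hk0, hk2⟩ := hk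
  have hs2 : Real.sqrt 2 < 1.5 := by
    nlinarith [Real.sq_sqrt (by norm_num : (0:ℝ) ≤ 2), Real.sqrt_nonneg 2]
  have hpi : (3:ℝ) < Real.pi := Real.pi_gt_three
  -- cosine positivity on the open set U = Ioo (-1) 2
  have hcos : ∀ x ∈ Set.Ioo (-1:ℝ) 2, 0 < Real.cos (k * (2 * x - 1) / 4) := by
    intro x hx
    obtain ⟨hx1, hx2⟩ := hx
    apply Real.cos_pos_of_mem_Ioo
    constructor
    · nlinarith
    · nlinarith
  have hU : IsOpen (Set.Ioo (-1:ℝ) 2) := isOpen_Ioo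
  have hsub : Set.Icc (0:ℝ) 1 ⊆ Set.Ioo (-1:ℝ) 2 := by
    intro x hx; exact ⟨by linarith [hx.1], by linarith [hx.2]⟩
  -- cos(k/4) > 0
  have hc4 : 0 < Real.cos (k / 4) := by
    have h2 : 0 < Real.sqrt 2 := Real.sqrt_pos.mpr (by norm_num)
    nlinarith
  have hkc : k / Real.cos (k / 4) = Real.sqrt 2 := by
    rw [div_eq_iff hc4.ne']
    exact hkeq
  -- boundary values
  have hb : ∀ x : ℝ, k * (2 * x - 1) / 4 = k / 4 ∨ k * (2 * x - 1) / 4 = -(k / 4) →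
      u x = 0 := by
    intro x hx
    have hc : Real.cos (k * (2 * x - 1) / 4) = Real.cos (k / 4) := by
      rcases hx with h | h
      · rw [h]
      · rw [h, Real.cos_neg]
    rw [hu x, hc, hkc, Real.log_sqrt (by norm_num : (0:ℝ) ≤ 2)]
    ring
  have hu0 : u 0 = 0 := hb 0 (Or.inr (by ring))
  have hu1 : u 1 = 0 := hb 1 (Or.inl (by ring))
  -- inner function derivative
  have hf : ∀ x : ℝ, HasDerivAt (fun y => k * (2 * y - 1) / 4) (k / 2) x := by
    intro x
    have h := ((((hasDerivAt_id x).const_mul (2:ℝ)).sub_const 1).const_mul k).div_const 4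
    refine h.congr_deriv ?_
    ring
  -- u has derivative w x = k * tan(θ x) on U
  set v : ℝ → ℝ := fun x => 2 * (Real.log k - Real.log (Real.cos (k * (2 * x - 1) / 4))) - Real.log 2 with hv
  have huv : ∀ x ∈ Set.Ioo (-1:ℝ) 2, u x = v x := by
    intro x hx
    rw [hu x, hv, Real.log_div hk0.ne' (hcos x hx).ne']
  set w : ℝ → ℝ := fun x => k * (Real.sin (k * (2 * x - 1) / 4) / Real.cos (k * (2 * x - 1) / 4)) with hw
  have hAw : ∀ x ∈ Set.Ioo (-1:ℝ) 2, HasDerivAt u (w x) x := by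
    intro x hx
    have hcx := hcos x hx
    have hcosf : HasDerivAt (fun y => Real.cos (k * (2 * y - 1) / 4))
        (-Real.sin (k * (2 * x - 1) / 4) * (k / 2)) x :=
      (Real.hasDerivAt_cos _).comp x (hf x)
    have hlog : HasDerivAt (fun y => Real.log (Real.cos (k * (2 * y - 1) / 4)))
        ((-Real.sin (k * (2 * x - 1) / 4) * (k / 2)) / Real.cos (k * (2 * x - 1) / 4)) x :=
      hcosf.log hcx.ne'
    have hvd : HasDerivAt v (w x) x := by
      have h := ((hlog.const_sub (Real.log k)).const_mul (2:ℝ)).sub_const (Real.log 2)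
      refine h.congr_deriv ?_
      simp only [hw]
      set c := Real.cos (k * (2 * x - 1) / 4)
      set s := Real.sin (k * (2 * x - 1) / 4)
      field_simp
    have hev : u =ᶠ[nhds x] v :=
      Filter.eventuallyEq_of_mem (hU.mem_nhds hx) huv
    exact hvd.congr_of_eventuallyEq hev
  -- deriv u = w on U
  have hduw : ∀ x ∈ Set.Ioo (-1:ℝ) 2, deriv u x = w x := fun x hx => (hAw x hx).deriv
  -- derivative of w
  have hBw : ∀ x ∈ Set.Ioo (-1:ℝ) 2,
      HasDerivAt w (k ^ 2 / (2 * Real.cos (k * (2 * x - 1) / 4) ^ 2)) x := by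
    intro x hx
    have hcx := hcos x hx
    have hsinf : HasDerivAt (fun y => Real.sin (k * (2 * y - 1) / 4))
        (Real.cos (k * (2 * x - 1) / 4) * (k / 2)) x :=
      (Real.hasDerivAt_sin _).comp x (hf x)
    have hcosf : HasDerivAt (fun y => Real.cos (k * (2 * y - 1) / 4))
        (-Real.sin (k * (2 * x - 1) / 4) * (k / 2)) x :=
      (Real.hasDerivAt_cos _).comp x (hf x)
    have hdiv := (hsinf.div hcosf hcx.ne').const_mul k
    refine hdiv.congr_deriv ?_
    have hpyth := Real.sin_sq_add_cos_sq (k * (2 * x - 1) / 4)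
    field_simp
    nlinarith [hpyth]
  -- second derivative on Icc
  have hmain : ∀ x ∈ Set.Icc (0:ℝ) 1, deriv (deriv u) x - Real.exp (u x) = 0 := by
    intro x hx
    have hxU := hsub hx
    have hcx := hcos x hxU
    have hev : deriv u =ᶠ[nhds x] w :=
      Filter.eventuallyEq_of_mem (hU.mem_nhds hxU) hduw
    have hd2 : deriv (deriv u) x = k ^ 2 / (2 * Real.cos (k * (2 * x - 1) / 4) ^ 2) := by
      rw [hev.deriv_eq]
      exact (hBw x hxU).deriv
    have hexp : Real.exp (u x) = k ^ 2 / (2 * Real.cos (k * (2 * x - 1) / 4) ^ 2) := by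
      rw [hu x]
      have hq : 0 < k / Real.cos (k * (2 * x - 1) / 4) := div_pos hk0 hcx
      have : 2 * Real.log (k / Real.cos (k * (2 * x - 1) / 4)) =
          Real.log ((k / Real.cos (k * (2 * x - 1) / 4)) ^ 2) := by
        rw [Real.log_pow]; push_cast; ring
      rw [this, Real.exp_sub, Real.exp_log (by positivity), Real.exp_log (by norm_num : (0:ℝ) < 2)]
      field_simp
    rw [hd2, hexp]
    ring
  -- smoothness
  have hsmooth : ContDiffOn ℝ (⊤ : ℕ∞) u (Set.Icc 0 1) := by
    have hvc : ContDiffOn ℝ (⊤ : ℕ∞) v (Set.Icc (0:ℝ) 1) := by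
      have hcf : ContDiff ℝ (⊤ : ℕ∞) (fun x : ℝ => Real.cos (k * (2 * x - 1) / 4)) := by
        apply Real.contDiff_cos.comp
        exact (contDiff_const.mul ((contDiff_const.mul contDiff_id).sub contDiff_const)).div_const 4
      have hl : ContDiffOn ℝ (⊤ : ℕ∞) (fun x : ℝ => Real.log (Real.cos (k * (2 * x - 1) / 4)))
          (Set.Icc (0:ℝ) 1) :=
        hcf.contDiffOn.log (fun x hx => (hcos x (hsub hx)).ne')
      exact (contDiffOn_const.mul (contDiffOn_const.sub hl)).sub contDiffOn_const
    exact hvc.congr (fun x hx => huv x (hsub hx))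
  exact ⟨hsmooth, hu0, hu1, hmain⟩
end
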